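/- Fix α > 0 and δ > 0, and for a positive integer n set N = ⌊n^{1+α}⌋ and A = n^{-(1-α-δ)}. Consider the sum test T = 1{ X_{[N]×[N]} > N·n^δ/2 }, where X_{[N]×[N]} = Σ_{1≤i,j≤N} X_{ij}. Then P₀(T = 1) ≤ exp(−n^{2δ}/8) and sup_{θ ∈ Θ(A, n, N)} P_θ(T = 0) ≤ exp(−n^{2δ}/8); consequently Risk(T, A, n) ≤ 2·exp(−n^{2δ}/8). -/

import Mathlib

open MeasureTheory ProbabilityTheory Real Filter Topology
open scoped NNReal

noncomputable section

/-- Law of the N×N Gaussian observation matrix with mean matrix θ and unit variances. -/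
def PTheta (N : ℕ) (θ : Fin N → Fin N → ℝ) : Measure (Fin N → Fin N → ℝ) :=
  Measure.pi fun i => Measure.pi fun j => gaussianReal (θ i j) 1

/-- Parameter space Θ(A, n, N). -/
def ThetaSet (A : ℝ) (n N : ℕ) : Set (Fin N → Fin N → ℝ) :=
  {θ | ∃ R C : Finset (Fin N), R.card = n ∧ C.card = n ∧
    (∀ i j, i ∈ R → j ∈ C → A ≤ θ i j) ∧
    (∀ i j, ¬(i ∈ R ∧ j ∈ C) → θ i j = 0)}

/-- Risk of the test with rejection region `T`: type-I error plus worst-case type-II error. -/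
def testRisk (n N : ℕ) (A : ℝ) (T : Set (Fin N → Fin N → ℝ)) : ℝ :=
  (PTheta N 0 T).toReal + ⨆ θ : ThetaSet A n N, (PTheta N θ.1 Tᶜ).toReal

/-- Minimax risk over all (measurable) tests. -/
def minimaxRisk (n N : ℕ) (A : ℝ) : ℝ :=
  ⨅ T : {T : Set (Fin N → Fin N → ℝ) // MeasurableSet T}, testRisk n N A T.1

/-! Under `P_θ` the centred total `Σ (X_ij - θ_ij)` is a sum of `N²` independent standard
Gaussians, hence sub-Gaussian with variance proxy `N²`, and Chernoff's bound at distance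
`N n^δ / 2` from the mean is `exp(-n^{2δ}/8)`. The threshold `N n^δ / 2` lies halfway between
the null mean `0` and the alternative mean, which is at least `n² A = n^{1+α+δ} ≥ N n^δ`. -/

instance isProbabilityMeasure_PTheta (N : ℕ) (θ : Fin N → Fin N → ℝ) :
    IsProbabilityMeasure (PTheta N θ) := by
  unfold PTheta; infer_instance

lemma hasSubgaussianMGF_sub_gaussianReal (m : ℝ) (v : ℝ≥0) :
    HasSubgaussianMGF (fun x ↦ x - m) v (gaussianReal m v) := by
  have hcentered : HasSubgaussianMGF id v (gaussianReal 0 v) :=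
    ⟨integrable_exp_mul_gaussianReal, fun t ↦ by simp [mgf_id_gaussianReal]⟩
  rwa [← sub_self m, ← gaussianReal_map_sub_const,
    HasSubgaussianMGF.id_map_iff (by fun_prop)] at hcentered

lemma HasSubgaussianMGF.sum_pi {ι : Type*} [Fintype ι] {Ω : ι → Type*}
    [∀ i, MeasurableSpace (Ω i)] {μ : ∀ i, Measure (Ω i)} [∀ i, IsProbabilityMeasure (μ i)]
    {X : ∀ i, Ω i → ℝ} {c : ι → ℝ≥0} (hX : ∀ i, HasSubgaussianMGF (X i) (c i) (μ i)) :
    HasSubgaussianMGF (fun ω ↦ ∑ i, X i (ω i)) (∑ i, c i) (Measure.pi μ) :=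
  HasSubgaussianMGF.sum_of_iIndepFun (iIndepFun_pi fun i ↦ (hX i).aemeasurable) fun i _ ↦
    HasSubgaussianMGF.of_map (measurable_pi_apply i).aemeasurable
      (by rw [(measurePreserving_eval μ i).map_eq]; exact hX i)

lemma hasSubgaussianMGF_sum_sub_PTheta (N : ℕ) (θ : Fin N → Fin N → ℝ) :
    HasSubgaussianMGF (fun x ↦ ∑ i, ∑ j, (x i j - θ i j)) ((N : ℝ≥0) ^ 2) (PTheta N θ) := by
  simpa [sq, PTheta] using HasSubgaussianMGF.sum_pi fun i ↦ HasSubgaussianMGF.sum_pi fun j ↦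
    hasSubgaussianMGF_sub_gaussianReal (θ i j) 1

lemma PTheta_real_sum_ge_le {N : ℕ} (θ : Fin N → Fin N → ℝ) {ε : ℝ} (hε : 0 ≤ ε) :
    (PTheta N θ).real {x | ∑ i, ∑ j, θ i j + ε ≤ ∑ i, ∑ j, x i j}
      ≤ exp (-ε ^ 2 / (2 * N ^ 2)) := by
  convert (hasSubgaussianMGF_sum_sub_PTheta N θ).measure_ge_le hε using 3
  · ext x
    simp only [Finset.sum_sub_distrib]
    constructor <;> intro h <;> linarith
  · push_cast; rfl

lemma PTheta_real_sum_le_le {N : ℕ} (θ : Fin N → Fin N → ℝ) {ε : ℝ} (hε : 0 ≤ ε) :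
    (PTheta N θ).real {x | ∑ i, ∑ j, x i j ≤ ∑ i, ∑ j, θ i j - ε}
      ≤ exp (-ε ^ 2 / (2 * N ^ 2)) := by
  convert (hasSubgaussianMGF_sum_sub_PTheta N θ).neg.measure_ge_le hε using 3
  · ext x
    simp only [Pi.neg_apply, Finset.sum_sub_distrib]
    constructor <;> intro h <;> linarith
  · push_cast; rfl

lemma PTheta_zero_real_sum_gt_le {N : ℕ} (hN : N ≠ 0) {e : ℝ} (he : 0 ≤ e) :
    (PTheta N 0).real {x | N * e / 2 < ∑ i, ∑ j, x i j} ≤ exp (-e ^ 2 / 8) :=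
  calc (PTheta N 0).real {x | N * e / 2 < ∑ i, ∑ j, x i j}
      ≤ (PTheta N 0).real {x | ∑ i, ∑ j, (0 : Fin N → Fin N → ℝ) i j + N * e / 2
          ≤ ∑ i, ∑ j, x i j} :=
        measureReal_mono <| Set.ofPred_subset_ofPred.2 fun x hx ↦ by simpa using hx.le
    _ ≤ exp (-(N * e / 2) ^ 2 / (2 * N ^ 2)) := PTheta_real_sum_ge_le 0 (by positivity)
    _ = exp (-e ^ 2 / 8) := by field_simp; ring_nf

lemma PTheta_real_sum_le_le_of_le_sum {N : ℕ} (hN : N ≠ 0) {θ : Fin N → Fin N → ℝ} {e : ℝ}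
    (he : 0 ≤ e) (hθ : N * e ≤ ∑ i, ∑ j, θ i j) :
    (PTheta N θ).real {x | ∑ i, ∑ j, x i j ≤ N * e / 2} ≤ exp (-e ^ 2 / 8) :=
  calc (PTheta N θ).real {x | ∑ i, ∑ j, x i j ≤ N * e / 2}
      ≤ (PTheta N θ).real {x | ∑ i, ∑ j, x i j ≤ ∑ i, ∑ j, θ i j - N * e / 2} :=
        measureReal_mono <| Set.ofPred_subset_ofPred.2 fun x hx ↦ by linarith
    _ ≤ exp (-(N * e / 2) ^ 2 / (2 * N ^ 2)) := PTheta_real_sum_le_le θ (by positivity)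
    _ = exp (-e ^ 2 / 8) := by field_simp; ring_nf

lemma mul_le_sum_of_mem_ThetaSet {A : ℝ} {n N : ℕ} {θ : Fin N → Fin N → ℝ}
    (hθ : θ ∈ ThetaSet A n N) : (n : ℝ) ^ 2 * A ≤ ∑ i, ∑ j, θ i j := by
  obtain ⟨R, C, hR, hC, hge, hzero⟩ := hθ
  calc (n : ℝ) ^ 2 * A = ∑ p ∈ R ×ˢ C, A := by simp [hR, hC, sq]
    _ ≤ ∑ p ∈ R ×ˢ C, θ p.1 p.2 :=
      Finset.sum_le_sum fun p hp ↦ hge _ _ (Finset.mem_product.1 hp).1 (Finset.mem_product.1 hp).2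
    _ = ∑ p : Fin N × Fin N, θ p.1 p.2 :=
      Finset.sum_subset (Finset.subset_univ _) fun p _ hp ↦
        hzero _ _ fun h ↦ hp (Finset.mem_product.2 h)
    _ = ∑ i, ∑ j, θ i j := Fintype.sum_prod_type _

lemma floor_rpow_mul_rpow_le {x : ℝ} (hx : 0 < x) (α δ : ℝ) :
    ⌊x ^ (1 + α)⌋₊ * x ^ δ ≤ x ^ 2 * x ^ (-(1 - α - δ)) :=
  calc ⌊x ^ (1 + α)⌋₊ * x ^ δ ≤ x ^ (1 + α) * x ^ δ := by
        gcongr; exact Nat.floor_le (by positivity)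
    _ = x ^ 2 * x ^ (-(1 - α - δ)) := by
        rw [← rpow_add hx, ← rpow_natCast, ← rpow_add hx]; congr 1; push_cast; ring

theorem sum_test_risk_dense_general (α δ : ℝ) (hα : 0 < α) (n N : ℕ) (hn : 0 < n)
    (hN : N = ⌊(n : ℝ) ^ (1 + α)⌋₊) (A : ℝ) (hA : A = (n : ℝ) ^ (-(1 - α - δ)))
    (T : Set (Fin N → Fin N → ℝ))
    (hT : T = {x | (N : ℝ) * (n : ℝ) ^ δ / 2 < ∑ i, ∑ j, x i j}) :
    (PTheta N 0 T).toReal ≤ Real.exp (-(n : ℝ) ^ (2 * δ) / 8) ∧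
    (⨆ θ : ThetaSet A n N, (PTheta N θ.1 Tᶜ).toReal) ≤ Real.exp (-(n : ℝ) ^ (2 * δ) / 8) ∧
    testRisk n N A T ≤ 2 * Real.exp (-(n : ℝ) ^ (2 * δ) / 8) := by
  have hn₀ : (0 : ℝ) < n := by exact_mod_cast hn
  have hN₀ : N ≠ 0 := by
    rw [hN, ← Nat.one_le_iff_ne_zero, Nat.one_le_floor_iff]
    exact one_le_rpow (by exact_mod_cast hn) (by linarith)
  have he : (n : ℝ) ^ (2 * δ) = ((n : ℝ) ^ δ) ^ 2 := by
    rw [mul_comm, rpow_mul hn₀.le, rpow_two]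
  have htypeI : (PTheta N 0 T).toReal ≤ exp (-(n : ℝ) ^ (2 * δ) / 8) := by
    rw [he, hT]
    exact PTheta_zero_real_sum_gt_le hN₀ (by positivity)
  have hthreshold : N * (n : ℝ) ^ δ ≤ (n : ℝ) ^ 2 * A := by
    rw [hN, hA]; exact floor_rpow_mul_rpow_le hn₀ α δ
  have htypeII (θ : ThetaSet A n N) : (PTheta N θ.1 Tᶜ).toReal ≤ exp (-(n : ℝ) ^ (2 * δ) / 8) := by
    rw [he, hT, Set.compl_ofPred]
    simp only [not_lt]
    exact PTheta_real_sum_le_le_of_le_sum hN₀ (by positivity)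
      (hthreshold.trans (mul_le_sum_of_mem_ThetaSet θ.2))
  have hsup := Real.iSup_le htypeII (exp_nonneg _)
  exact ⟨htypeI, hsup, by unfold testRisk; linarith⟩

/-- **Risk of the calibrated sum test in the dense above-boundary regime.**  Fix α > 0,
δ > 0; for a positive integer n put `N = ⌊n^{1+α}⌋`, `A = n^{−(1−α−δ)}`, and let T be the
sum test rejecting when `Σ_{i,j} X_{ij} > N n^δ / 2`.  Then both the type-I error and the
worst-case type-II error are at most `exp(−n^{2δ}/8)`, whence
`Risk(T, A, n) ≤ 2 exp(−n^{2δ}/8)`. -/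
theorem sum_test_risk_dense (α δ : ℝ) (hα : 0 < α) (hδ : 0 < δ) (n N : ℕ) (hn : 0 < n)
    (hN : N = ⌊(n : ℝ) ^ (1 + α)⌋₊) (A : ℝ) (hA : A = (n : ℝ) ^ (-(1 - α - δ)))
    (T : Set (Fin N → Fin N → ℝ))
    (hT : T = {x | (N : ℝ) * (n : ℝ) ^ δ / 2 < ∑ i, ∑ j, x i j}) :
    (PTheta N 0 T).toReal ≤ Real.exp (-(n : ℝ) ^ (2 * δ) / 8) ∧
    (⨆ θ : ThetaSet A n N, (PTheta N θ.1 Tᶜ).toReal) ≤ Real.exp (-(n : ℝ) ^ (2 * δ) / 8) ∧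
    testRisk n N A T ≤ 2 * Real.exp (-(n : ℝ) ^ (2 * δ) / 8) :=
  sum_test_risk_dense_general α δ hα n N hn hN A hA T hT
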